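/- (Mollification estimate, display (5.21)) Let T > 0, κ > 0, m ∈ ℝ^d, and let g : [0,∞) → ℝ^d be measurable with ‖g(u)‖₁ ≤ 1 for all u ≥ 0. Define g^κ(s) = κ^{-1} ∫_s^{s+κ} g(u) du. Let M and M^κ be the unique continuous solutions on [0,T] of M(t) = m + ∫₀ᵗ g(s) ds − ∫₀ᵗ M(s) ds and M^κ(t) = m + ∫₀ᵗ g^κ(s) ds − ∫₀ᵗ M^κ(s) ds. Then sup_{t ∈ [0,T]} ‖M^κ(t) − M(t)‖₁ ≤ 3κ e^T. -/

import Mathlib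

/-! Write `D = M^κ - M`, so that `D(t) = H(t) - ∫₀ᵗ D` with `H(t) = ∫₀ᵗ (g^κ - g)`.
If `P` is a primitive of `g`, then `g^κ(s) = κ⁻¹ (P(s + κ) - P(s))`, and shifting the variable of
integration turns `H(t)` into `κ⁻¹ ∫₀^κ ((P(t + r) - P(t)) - (P(r) - P(0))) dr`. Both increments
have ℓ¹ norm at most `r`, hence `‖H(t)‖₁ ≤ κ`, so `‖D(t)‖₁ ≤ κ + ∫₀ᵗ ‖D‖₁` and Grönwall's
inequality gives `‖D(t)‖₁ ≤ κ eᵗ`. The estimates are carried out in `PiLp 1`, where `‖·‖₁` is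
the norm. -/

open MeasureTheory

noncomputable section

/-- ℓ¹ norm on `ℝ^d`. -/
def l1 {d : ℕ} (v : Fin d → ℝ) : ℝ := ∑ x, |v x|

open Set Real intervalIntegral

theorem ContinuousOn.hasDerivWithinAt_integral_Icc {φ : ℝ → ℝ} {a b x : ℝ}
    (hφ : ContinuousOn φ (Icc a b)) (hx : x ∈ Icc a b) :
    HasDerivWithinAt (fun u => ∫ s in a..u, φ s) (φ x) (Icc a b) x := by
  have : Fact (x ∈ Icc a b) := ⟨hx⟩
  exact integral_hasDerivWithinAt_right
    ((hφ.mono (Icc_subset_Icc le_rfl hx.2)).intervalIntegrable_of_Icc hx.1)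
    (hφ.stronglyMeasurableAtFilter_nhdsWithin measurableSet_Icc x) (hφ x hx)

theorem le_mul_exp_of_le_add_mul_integral {φ : ℝ → ℝ} {δ K T : ℝ} (hK : 0 ≤ K)
    (hφ : ContinuousOn φ (Icc 0 T)) (h : ∀ t ∈ Icc 0 T, φ t ≤ δ + K * ∫ s in 0..t, φ s) :
    ∀ t ∈ Icc 0 T, φ t ≤ δ * exp (K * t) := by
  set f : ℝ → ℝ := fun t => δ + K * ∫ s in 0..t, φ s
  have hf : ∀ t ∈ Icc 0 T, HasDerivWithinAt f (K * φ t) (Icc 0 T) t := fun t ht =>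
    ((hφ.hasDerivWithinAt_integral_Icc ht).const_mul K).const_add δ
  have hf_le : ∀ t ∈ Icc 0 T, f t ≤ gronwallBound δ K 0 (t - 0) :=
    le_gronwallBound_of_liminf_deriv_right_le (fun t ht => (hf t ht).continuousWithinAt)
      (fun t ht _ hr => ((hf t (Ico_subset_Icc_self ht)).mono_of_mem_nhdsWithin
        (Icc_mem_nhdsGE_of_mem ht)).liminf_right_slope_le hr)
      (by simp [f])
      (fun t ht => by
        simpa using mul_le_mul_of_nonneg_left (h t (Ico_subset_Icc_self ht)) hK)
  intro t ht
  simpa [gronwallBound_ε0] using (h t ht).trans (hf_le t ht)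

section NormedSpace

variable {E : Type*} [NormedAddCommGroup E] [NormedSpace ℝ E]

theorem norm_sub_le_mul_exp_of_volterra {X Y F G : ℝ → E} {T δ : ℝ}
    (hX : ContinuousOn X (Icc 0 T)) (hY : ContinuousOn Y (Icc 0 T))
    (hXF : ∀ t ∈ Icc 0 T, X t = F t - ∫ s in 0..t, X s)
    (hYG : ∀ t ∈ Icc 0 T, Y t = G t - ∫ s in 0..t, Y s)
    (hFG : ∀ t ∈ Icc 0 T, ‖F t - G t‖ ≤ δ) :
    ∀ t ∈ Icc 0 T, ‖X t - Y t‖ ≤ δ * exp t := by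
  have hgronwall := le_mul_exp_of_le_add_mul_integral zero_le_one (hX.sub hY).norm fun t ht => by
    have hint : ∀ Z : ℝ → E, ContinuousOn Z (Icc 0 T) → IntervalIntegrable Z volume 0 t :=
      fun Z hZ => (hZ.mono (Icc_subset_Icc le_rfl ht.2)).intervalIntegrable_of_Icc ht.1
    calc ‖X t - Y t‖ = ‖(F t - G t) - ∫ s in 0..t, (X s - Y s)‖ := by
          rw [hXF t ht, hYG t ht, integral_sub (hint X hX) (hint Y hY)]
          congr 1
          abel
      _ ≤ ‖F t - G t‖ + ‖∫ s in 0..t, (X s - Y s)‖ := norm_sub_le _ _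
      _ ≤ δ + 1 * ∫ s in 0..t, ‖X s - Y s‖ := by
          rw [one_mul]
          exact add_le_add (hFG t ht) (norm_integral_le_integral_norm ht.1)
  simpa using hgronwall

def mollify (κ : ℝ) (g : ℝ → E) (s : ℝ) : E := κ⁻¹ • ∫ u in s..s + κ, g u

variable {g : ℝ → E} {κ : ℝ}

theorem mollify_eq_smul_sub (hg : ∀ a b, IntervalIntegrable g volume a b) (s : ℝ) :
    mollify κ g s = κ⁻¹ • ((∫ u in 0..s + κ, g u) - ∫ u in 0..s, g u) := by
  rw [mollify, integral_interval_sub_left (hg _ _) (hg _ _)]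

theorem continuous_mollify (hg : ∀ a b, IntervalIntegrable g volume a b) :
    Continuous (mollify κ g) := by
  simp_rw [funext (mollify_eq_smul_sub hg)]
  have hP := continuous_primitive hg 0
  fun_prop

theorem integral_mollify_sub_integral [CompleteSpace E]
    (hg : ∀ a b, IntervalIntegrable g volume a b) (hκ : κ ≠ 0) (t : ℝ) :
    (∫ s in 0..t, mollify κ g s) - ∫ s in 0..t, g s =
      κ⁻¹ • ∫ r in 0..κ, ((∫ u in t..t + r, g u) - ∫ u in 0..r, g u) := by
  set P : ℝ → E := fun y => ∫ u in 0..y, g u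
  have hP : Continuous P := continuous_primitive hg 0
  have hPi : ∀ a b, IntervalIntegrable P volume a b := hP.intervalIntegrable
  have hPt : IntervalIntegrable (fun r => P (t + r)) volume 0 κ :=
    (hP.comp (continuous_const.add continuous_id)).intervalIntegrable 0 κ
  have hmollify : ∀ s, mollify κ g s = κ⁻¹ • (P (s + κ) - P s) := mollify_eq_smul_sub hg
  have hincr : ∀ r, (∫ u in t..t + r, g u) = P (t + r) - P t := fun r =>
    (integral_interval_sub_left (hg _ _) (hg _ _)).symm
  calc (∫ s in 0..t, mollify κ g s) - ∫ s in 0..t, g s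
      = κ⁻¹ • ((∫ s in 0..t, P (s + κ)) - ∫ s in 0..t, P s) - P t := by
        have hshift : IntervalIntegrable (fun s => P (s + κ)) volume 0 t :=
          (hP.comp (continuous_id.add continuous_const)).intervalIntegrable 0 t
        rw [integral_congr (fun s _ => hmollify s), intervalIntegral.integral_smul,
          integral_sub hshift (hPi 0 t)]
    _ = κ⁻¹ • ((∫ r in 0..κ, P (t + r)) - ∫ r in 0..κ, P r) - P t := by
        rw [integral_comp_add_right, integral_comp_add_left, zero_add, add_zero,
          integral_interval_sub_interval_comm' (hPi _ _) (hPi _ _) (hPi _ _)]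
    _ = κ⁻¹ • ∫ r in 0..κ, ((∫ u in t..t + r, g u) - ∫ u in 0..r, g u) := by
        simp_rw [hincr]
        rw [integral_sub (hPt.sub intervalIntegrable_const) (hPi 0 κ),
          integral_sub hPt intervalIntegrable_const, intervalIntegral.integral_const, sub_zero]
        simp only [smul_sub, smul_smul, inv_mul_cancel₀ hκ, one_smul]
        abel

theorem norm_integral_mollify_sub_integral_le [CompleteSpace E]
    (hg : ∀ a b, IntervalIntegrable g volume a b) {C t : ℝ} (hC : ∀ u, 0 ≤ u → ‖g u‖ ≤ C)
    (hκ : 0 < κ) (ht : 0 ≤ t) :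
    ‖(∫ s in 0..t, mollify κ g s) - ∫ s in 0..t, g s‖ ≤ C * κ := by
  have hincr : ∀ a r, 0 ≤ a → 0 ≤ r → ‖∫ u in a..a + r, g u‖ ≤ C * r := fun a r ha hr => by
    have hbound : ∀ u ∈ uIoc a (a + r), ‖g u‖ ≤ C := fun u hu => by
      rw [uIoc_of_le (by linarith)] at hu
      exact hC u (ha.trans hu.1.le)
    simpa [abs_of_nonneg hr] using norm_integral_le_of_norm_le_const hbound
  have hpt : ∀ r ∈ Ioc 0 κ, ‖(∫ u in t..t + r, g u) - ∫ u in 0..r, g u‖ ≤ 2 * C * r := by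
    intro r hr
    have h0 := hincr 0 r le_rfl hr.1.le
    rw [zero_add] at h0
    linarith [norm_sub_le (∫ u in t..t + r, g u) (∫ u in 0..r, g u), hincr t r ht hr.1.le]
  rw [integral_mollify_sub_integral hg hκ.ne', norm_smul, norm_inv, norm_of_nonneg hκ.le]
  calc κ⁻¹ * ‖∫ r in 0..κ, ((∫ u in t..t + r, g u) - ∫ u in 0..r, g u)‖
      ≤ κ⁻¹ * ∫ r in 0..κ, 2 * C * r := by
        gcongr
        exact intervalIntegral.norm_integral_le_of_norm_le hκ.le (ae_of_all _ hpt)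
          ((continuous_const_mul (2 * C)).intervalIntegrable 0 κ)
    _ = C * κ := by
        rw [intervalIntegral.integral_const_mul, integral_id]
        field_simp
        ring

end NormedSpace

section PiLp

variable {ι : Type*} [Fintype ι] {q : ENNReal} [Fact (1 ≤ q)] {E : ι → Type*}
  [∀ i, NormedAddCommGroup (E i)] {f : ℝ → PiLp q E} {a b : ℝ}

theorem intervalIntegrable_piLp_iff :
    IntervalIntegrable f volume a b ↔ ∀ i, IntervalIntegrable (f · i) volume a b := by
  simp only [IntervalIntegrable, IntegrableOn, integrable_piLp_iff, forall_and]

theorem eval_intervalIntegral_piLp [∀ i, NormedSpace ℝ (E i)] [∀ i, CompleteSpace (E i)]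
    (hf : ∀ i, IntervalIntegrable (f · i) volume a b) (i : ι) :
    (∫ x in a..b, f x) i = ∫ x in a..b, f x i := by
  rw [intervalIntegral, intervalIntegral, PiLp.sub_apply,
    eval_integral_piLp (fun j => (hf j).1), eval_integral_piLp (fun j => (hf j).2)]

end PiLp

theorem integral_indicator_Ici_of_nonneg {E : Type*} [NormedAddCommGroup E] [NormedSpace ℝ E]
    {f : ℝ → E} {a b : ℝ} (ha : 0 ≤ a) (hab : a ≤ b) :
    ∫ u in a..b, (Ici 0).indicator f u = ∫ u in a..b, f u :=
  integral_congr fun u hu => indicator_of_mem (ha.trans (uIcc_of_le hab ▸ hu).1 : u ∈ Ici 0) f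

section L1

variable {d : ℕ}

theorem l1_eq_norm_toLp (v : Fin d → ℝ) : l1 v = ‖WithLp.toLp 1 v‖ := by
  simp [l1, PiLp.norm_eq_of_L1]

theorem abs_le_l1 (v : Fin d → ℝ) (x : Fin d) : |v x| ≤ l1 v :=
  Finset.single_le_sum (f := fun y => |v y|) (fun _ _ => abs_nonneg _) (Finset.mem_univ x)

theorem continuousOn_toLp {M : ℝ → Fin d → ℝ} {s : Set ℝ}
    (hM : ∀ x, ContinuousOn (fun t => M t x) s) :
    ContinuousOn (fun t => WithLp.toLp 1 (M t)) s :=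
  (PiLp.continuous_toLp 1 _).comp_continuousOn (continuousOn_pi.2 hM)

theorem toLp_eq_sub_integral_of_apply_eq {M F : ℝ → Fin d → ℝ} {T : ℝ}
    (hMc : ∀ x, ContinuousOn (fun t => M t x) (Icc 0 T))
    (hM : ∀ t ∈ Icc 0 T, ∀ x, M t x = F t x - ∫ s in 0..t, M s x) :
    ∀ t ∈ Icc 0 T,
      WithLp.toLp 1 (M t) = WithLp.toLp 1 (F t) - ∫ s in 0..t, WithLp.toLp 1 (M s) := by
  intro t ht
  ext x
  rw [PiLp.sub_apply, eval_intervalIntegral_piLp fun y =>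
    ((hMc y).mono (Icc_subset_Icc le_rfl ht.2)).intervalIntegrable_of_Icc ht.1]
  exact hM t ht x

theorem l1_integral_mollify_sub_integral_le {g : ℝ → Fin d → ℝ} {C κ t : ℝ}
    (hgm : ∀ x, Measurable fun u => g u x) (hgC : ∀ u, 0 ≤ u → l1 (g u) ≤ C)
    (hκ : 0 < κ) (ht : 0 ≤ t) :
    l1 (fun x => (∫ s in 0..t, κ⁻¹ * ∫ u in s..s + κ, g u x) - ∫ s in 0..t, g s x) ≤ C * κ := by
  -- `g` cut off to `[0, ∞)`, where it is bounded, so that it is interval integrable everywhere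
  set G : ℝ → PiLp 1 (fun _ : Fin d => ℝ) :=
    fun u => WithLp.toLp 1 fun x => (Ici 0).indicator (fun u => g u x) u
  have hC : 0 ≤ C := (Finset.sum_nonneg fun _ _ => abs_nonneg _).trans (hgC 0 le_rfl)
  have hGcoord_int : ∀ x a b, IntervalIntegrable (G · x) volume a b := fun x a b => by
    refine (intervalIntegrable_const (c := C)).mono_fun'
      ((hgm x).indicator measurableSet_Ici).aestronglyMeasurable (ae_of_all _ fun u => ?_)
    by_cases hu : u ∈ Ici 0
    · simpa [G, hu] using (abs_le_l1 (g u) x).trans (hgC u hu)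
    · simpa [G, hu] using hC
  have hGi : ∀ a b, IntervalIntegrable G volume a b := fun a b =>
    intervalIntegrable_piLp_iff.2 fun x => hGcoord_int x a b
  have hGC : ∀ u, 0 ≤ u → ‖G u‖ ≤ C := fun u hu => by
    simpa [← l1_eq_norm_toLp, G, indicator_of_mem (show u ∈ Ici 0 from hu)] using hgC u hu
  have hmollify : ∀ s x, mollify κ G s x = κ⁻¹ * ∫ u in s..s + κ, G u x := fun s x => by
    rw [mollify, PiLp.smul_apply, eval_intervalIntegral_piLp fun y => hGcoord_int y _ _,
      smul_eq_mul]
  have hvec : WithLp.toLp 1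
      (fun x => (∫ s in 0..t, κ⁻¹ * ∫ u in s..s + κ, g u x) - ∫ s in 0..t, g s x) =
        (∫ s in 0..t, mollify κ G s) - ∫ s in 0..t, G s := by
    ext x
    rw [PiLp.sub_apply, eval_intervalIntegral_piLp fun y => hGcoord_int y _ _,
      eval_intervalIntegral_piLp fun y =>
        intervalIntegrable_piLp_iff.1 ((continuous_mollify hGi).intervalIntegrable 0 t) y]
    simp only [hmollify, G]
    rw [integral_indicator_Ici_of_nonneg le_rfl ht]
    congr 1
    refine integral_congr fun s hs => ?_
    rw [uIcc_of_le ht] at hs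
    rw [integral_indicator_Ici_of_nonneg hs.1 (by linarith)]
  rw [l1_eq_norm_toLp, hvec]
  exact norm_integral_mollify_sub_integral_le hGi hGC hκ ht

end L1

theorem mollification_estimate {d : ℕ} (T κ : ℝ) (hκ : 0 < κ)
    (m : Fin d → ℝ) (g : ℝ → Fin d → ℝ)
    (hgm : ∀ x, Measurable fun u => g u x)
    (hgb : ∀ u : ℝ, 0 ≤ u → l1 (g u) ≤ 1)
    (M Mκ : ℝ → Fin d → ℝ)
    (hMc : ∀ x, ContinuousOn (fun t => M t x) (Set.Icc 0 T))
    (hMκc : ∀ x, ContinuousOn (fun t => Mκ t x) (Set.Icc 0 T))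
    (hM : ∀ t ∈ Set.Icc (0 : ℝ) T, ∀ x,
      M t x = m x + (∫ s in (0:ℝ)..t, g s x) - ∫ s in (0:ℝ)..t, M s x)
    (hMκ : ∀ t ∈ Set.Icc (0 : ℝ) T, ∀ x,
      Mκ t x = m x + (∫ s in (0:ℝ)..t, κ⁻¹ * ∫ u in s..(s + κ), g u x)
        - ∫ s in (0:ℝ)..t, Mκ s x) :
    ∀ t ∈ Set.Icc (0 : ℝ) T, l1 (fun x => Mκ t x - M t x) ≤ 3 * κ * Real.exp T := by
  intro t ht
  have hstable := norm_sub_le_mul_exp_of_volterra (δ := κ)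
    (continuousOn_toLp hMκc) (continuousOn_toLp hMc) (toLp_eq_sub_integral_of_apply_eq hMκc hMκ)
    (toLp_eq_sub_integral_of_apply_eq hMc hM) (fun s hs => ?_) t ht
  · calc l1 (fun x => Mκ t x - M t x) ≤ κ * exp t := by rwa [l1_eq_norm_toLp]
      _ ≤ 3 * κ * exp T := by nlinarith [exp_le_exp.2 ht.2, exp_pos t]
  · rw [← WithLp.toLp_sub, ← l1_eq_norm_toLp]
    convert l1_integral_mollify_sub_integral_le hgm hgb hκ hs.1 using 2
    · ext x
      exact add_sub_add_left_eq_sub _ _ _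
    · rw [one_mul]

end
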